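/- arXiv:1511.07321 — 2 statements merged into one kernel-verified Lean document; each statement's English description precedes it below -/
import Mathlib

section
/- The points p1 = (-2, 3) and p3 = (2, 5) are ℤ-linearly independent in the abelian group E(ℚ): for all integers m, n, if m·p1 + n·p3 = O then m = 0 and n = 0. In particular the map ℤ ⊕ ℤ → E(ℚ), (m,n) ↦ m·p1 + n·p3, is injective. -/
open WeierstrassCurve

noncomputable section

/-- The elliptic curve `E : y² = x³ + 17` over `ℚ`. -/
def E : WeierstrassCurve ℚ := ⟨0, 0, 0, 0, 17⟩

lemma hp1 : E.toAffine.Nonsingular (-2) 3 := by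
  rw [Affine.nonsingular_iff, Affine.equation_iff]; norm_num [E]

/-- The point `p1 = ((-2), 3)` on `E`. -/
def p1 : E.toAffine.Point := .some _ _ hp1

lemma hp3 : E.toAffine.Nonsingular 2 5 := by
  rw [Affine.nonsingular_iff, Affine.equation_iff]; norm_num [E]

/-- The point `p3 = (2, 5)` on `E`. -/
def p3 : E.toAffine.Point := .some _ _ hp3

/-! The 2-descent map `E(ℚ) → K^× / (K^×)²`, `(x, y) ↦ x + θ`, with `K = ℚ(θ)`, `θ³ = 17`, is a
homomorphism: for three collinear points on `E`, `(x₁ + θ)(x₂ + θ)(x₃ + θ)` is the square of the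
equation of their line evaluated at `x = -θ`. It sends `p1`, `p3` and `p1 + p3` to the classes of
`θ - 2`, `θ + 2` and `θ² - 4`. None of these is a square in `K`: a square root, reduced modulo a
degree-one prime above 11 (where `θ ↦ 8`) or above 23 (where `θ ↦ 15`), would be a square root of
a quadratic non-residue. So `p1`, `p3` and `p1 + p3` are not in `2 E(ℚ)`, while `E(ℚ)` has no
2-torsion because 17 is not a rational cube; hence `m • p1 + n • p3 = 0` forces `m` and `n` to be
even, and halving them repeatedly forces them to vanish. -/

open Polynomial

theorem AddCommGroup.eq_zero_of_zsmul_add_zsmul_eq_zero {A : Type*} [AddCommGroup A]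
    (htors : ∀ P : A, 2 • P = 0 → P = 0) {a b : A} (ha : ∀ c : A, 2 • c ≠ a)
    (hb : ∀ c : A, 2 • c ≠ b) (hab : ∀ c : A, 2 • c ≠ a + b) :
    ∀ m n : ℤ, m • a + n • b = 0 → m = 0 ∧ n = 0 := by
  suffices ∀ N : ℕ, ∀ m n : ℤ, m.natAbs + n.natAbs ≤ N → m • a + n • b = 0 → m = 0 ∧ n = 0 from
    fun m n => this _ m n le_rfl
  intro N
  induction N with
  | zero => intro m n hN _; omega
  | succ N ih =>
    intro m n hN h
    obtain ⟨m, rfl | rfl⟩ := Int.even_or_odd' m <;> obtain ⟨n, rfl | rfl⟩ := Int.even_or_odd' n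
    · have := ih m n (by omega) (htors _ (by linear_combination (norm := module) h))
      omega
    · exact absurd (by linear_combination (norm := module) -h) (hb (-(m • a + n • b)))
    · exact absurd (by linear_combination (norm := module) -h) (ha (-(m • a + n • b)))
    · exact absurd (by linear_combination (norm := module) -h) (hab (-(m • a + n • b)))

theorem Units.isSquare_iff_isSquare_val {G₀ : Type*} [CommGroupWithZero G₀] (u : G₀ˣ) :
    IsSquare u ↔ IsSquare (u : G₀) := by
  refine ⟨fun h => h.map (Units.coeHom G₀), fun ⟨r, hr⟩ => ?_⟩
  have hr0 : r ≠ 0 := by rintro rfl; simp at hr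
  exact ⟨Units.mk0 r hr0, Units.ext (by simpa using hr)⟩

abbrev SquareClass (G : Type*) [CommGroup G] := G ⧸ (powMonoidHom 2 : G →* G).range

namespace SquareClass

variable {G : Type*} [CommGroup G]

theorem mk_eq_one_iff (g : G) : (g : SquareClass G) = 1 ↔ IsSquare g := by
  rw [QuotientGroup.eq_one_iff, MonoidHom.mem_range]
  simp only [powMonoidHom_apply, sq, IsSquare, eq_comm]

theorem sq_eq_one (q : SquareClass G) : q ^ 2 = 1 := by
  induction q using QuotientGroup.induction_on with
  | H g => rw [← QuotientGroup.mk_pow, mk_eq_one_iff]; exact ⟨g, sq g⟩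

theorem mk_eq_mul_of_isSquare_mul_mul {a b c : G} (h : IsSquare (a * b * c)) :
    (c : SquareClass G) = a * b := by
  have habc : (a : SquareClass G) * b * c = 1 := (mk_eq_one_iff _).2 h
  have hab := sq_eq_one ((a : SquareClass G) * (b : SquareClass G))
  rw [sq] at hab
  exact mul_left_cancel (habc.trans hab.symm)

end SquareClass

theorem rat_pow_three_ne_seventeen (q : ℚ) : q ^ 3 ≠ 17 := by
  intro h
  have hnum : q.num ^ 3 = 17 := by simpa using congrArg Rat.num h
  rcases le_or_gt q.num 2 with h2 | h3
  · nlinarith [sq_nonneg q.num, sq_nonneg (q.num + 3)]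
  · nlinarith [sq_nonneg q.num]

instance : Fact (Irreducible (X ^ 3 - C 17 : ℚ[X])) :=
  ⟨X_pow_sub_C_irreducible_of_prime Nat.prime_three rat_pow_three_ne_seventeen⟩

theorem monic_X_pow_three_sub_C : (X ^ 3 - C 17 : ℚ[X]).Monic :=
  monic_X_pow_sub_C _ three_ne_zero

abbrev K : Type := AdjoinRoot (X ^ 3 - C 17 : ℚ[X])

def θ : K := AdjoinRoot.root _

theorem θ_pow_three : θ ^ 3 = 17 := by
  have h := AdjoinRoot.mk_self (f := (X ^ 3 - C 17 : ℚ[X]))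
  rw [map_sub, map_pow, AdjoinRoot.mk_X, AdjoinRoot.mk_C, sub_eq_zero] at h
  rw [θ, h, map_ofNat]

theorem coeffs_eq_zero_of_eq_zero {a b c : ℚ} (h : (a : K) + b * θ + c * θ ^ 2 = 0) :
    a = 0 ∧ b = 0 ∧ c = 0 := by
  have hmk : AdjoinRoot.mk (X ^ 3 - C 17) (C c * X ^ 2 + C b * X + C a) = 0 := by
    rw [← h, θ]
    simp only [map_add, map_mul, map_pow, AdjoinRoot.mk_X, AdjoinRoot.mk_C, eq_ratCast]
    ring
  have hg : C c * X ^ 2 + C b * X + C a = 0 := by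
    by_contra hg
    refine AdjoinRoot.mk_ne_zero_of_degree_lt monic_X_pow_three_sub_C hg ?_ hmk
    rw [degree_X_pow_sub_C three_pos]
    exact degree_quadratic_le.trans_lt (by norm_num)
  refine ⟨?_, ?_, ?_⟩
  · simpa using congrArg (coeff · 0) hg
  · simpa using congrArg (coeff · 1) hg
  · simpa using congrArg (coeff · 2) hg

theorem exists_rat_coeffs (ξ : K) : ∃ a b c : ℚ, ξ = a + b * θ + c * θ ^ 2 := by
  obtain ⟨P, rfl⟩ := AdjoinRoot.mk_surjective ξ
  set Q := P %ₘ (X ^ 3 - C 17)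
  have hQ : Q.natDegree < 3 := by
    simpa using natDegree_modByMonic_lt P monic_X_pow_three_sub_C
      (Fact.out : Irreducible (X ^ 3 - C 17 : ℚ[X])).ne_one
  refine ⟨Q.coeff 0, Q.coeff 1, Q.coeff 2, ?_⟩
  rw [← AdjoinRoot.mk_leftInverse monic_X_pow_three_sub_C (AdjoinRoot.mk _ P),
    AdjoinRoot.modByMonicHom_mk, ← AdjoinRoot.aeval_eq, aeval_eq_sum_range' hQ]
  simp [Finset.sum_range_succ, θ, Algebra.smul_def]

theorem exists_int_coeffs (ξ : K) :
    ∃ d A B C : ℤ, d ≠ 0 ∧ (d : K) * ξ = A + B * θ + C * θ ^ 2 := by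
  obtain ⟨a, b, c, rfl⟩ := exists_rat_coeffs ξ
  refine ⟨a.den * b.den * c.den, a.num * b.den * c.den, b.num * a.den * c.den,
    c.num * a.den * b.den, by positivity, ?_⟩
  have hnum (q : ℚ) : (q.num : K) = q * q.den := by exact_mod_cast (Rat.mul_den_eq_num q).symm
  push_cast
  rw [hnum, hnum, hnum]
  ring

theorem add_mul_add_mul_sq_sq {R : Type*} [CommRing R] {t : R} (ht : t ^ 3 = 17) (a b c : R) :
    (a + b * t + c * t ^ 2) ^ 2 =
      (a ^ 2 + 34 * b * c) + (2 * a * b + 17 * c ^ 2) * t + (b ^ 2 + 2 * a * c) * t ^ 2 := by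
  linear_combination (2 * b * c + c ^ 2 * t) * ht

/-- The hypotheses say `(a + b θ + c θ²)² = 0` in `F[θ] / (θ³ - 17)`, which is reduced because
`X³ - 17` is separable when `3 * 17 ≠ 0` in `F`. -/
theorem eq_zero_of_sq_coeffs_eq_zero {F : Type*} [Field F] (h3 : (3 : F) ≠ 0)
    (h17 : (17 : F) ≠ 0) {a b c : F} (h₀ : a ^ 2 + 34 * b * c = 0)
    (h₁ : 2 * a * b + 17 * c ^ 2 = 0) (h₂ : b ^ 2 + 2 * a * c = 0) : a = 0 ∧ b = 0 ∧ c = 0 := by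
  -- multiply `a² = -34 b c`, `b² = -2 a c` and `17 c² = -2 a b`
  have habc : (3 ^ 2 * 17 : F) * (a * b * c) ^ 2 = 0 := by
    linear_combination 17 * b ^ 2 * c ^ 2 * h₀ - 578 * b * c ^ 3 * h₂ + 68 * a * b * c ^ 2 * h₁
  simp only [mul_eq_zero, pow_eq_zero_iff, ne_eq, OfNat.ofNat_ne_zero, not_false_eq_true, h3, h17,
    false_or] at habc
  rcases habc with (rfl | rfl) | rfl
  · obtain rfl : b = 0 := by simpa using h₂
    simpa [h17] using h₁
  · obtain rfl : a = 0 := by simpa using h₀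
    simpa [h17] using h₁
  · obtain rfl : a = 0 := by simpa using h₀
    simpa using h₂

theorem eq_zero_of_sq_coeffs_eq_sq_mul {p : ℕ} [Fact p.Prime] (hp3 : (3 : ZMod p) ≠ 0)
    (hp17 : (17 : ZMod p) ≠ 0) {r : ZMod p} (hr : r ^ 3 = 17) {u₀ u₁ u₂ : ℤ}
    (hu : ¬IsSquare ((u₀ : ZMod p) + u₁ * r + u₂ * r ^ 2)) {d A B C : ℤ}
    (h₀ : A ^ 2 + 34 * B * C = d ^ 2 * u₀) (h₁ : 2 * A * B + 17 * C ^ 2 = d ^ 2 * u₁)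
    (h₂ : B ^ 2 + 2 * A * C = d ^ 2 * u₂) : d = 0 := by
  induction hn : d.natAbs using Nat.strong_induction_on generalizing d A B C with
  | _ n ih =>
  have h₀' := congrArg (Int.cast : ℤ → ZMod p) h₀
  have h₁' := congrArg (Int.cast : ℤ → ZMod p) h₁
  have h₂' := congrArg (Int.cast : ℤ → ZMod p) h₂
  push_cast at h₀' h₁' h₂'
  by_cases hpd : (d : ZMod p) = 0
  · -- then `p` divides `A`, `B`, `C` too, and dividing everything by `p` shrinks `d`
    rw [hpd, zero_pow two_ne_zero, zero_mul] at h₀' h₁' h₂'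
    obtain ⟨hA, hB, hC⟩ := eq_zero_of_sq_coeffs_eq_zero hp3 hp17 h₀' h₁' h₂'
    obtain ⟨A, rfl⟩ := (ZMod.intCast_zmod_eq_zero_iff_dvd A p).1 hA
    obtain ⟨B, rfl⟩ := (ZMod.intCast_zmod_eq_zero_iff_dvd B p).1 hB
    obtain ⟨C, rfl⟩ := (ZMod.intCast_zmod_eq_zero_iff_dvd C p).1 hC
    obtain ⟨d, rfl⟩ := (ZMod.intCast_zmod_eq_zero_iff_dvd d p).1 hpd
    have hp : 1 < p := (Fact.out : p.Prime).one_lt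
    have hp2 : (p : ℤ) ^ 2 ≠ 0 := by positivity
    by_contra hd
    have hd' : d ≠ 0 := right_ne_zero_of_mul hd
    refine hd' (ih d.natAbs ?_ (A := A) (B := B) (C := C) (mul_left_cancel₀ hp2 ?_)
      (mul_left_cancel₀ hp2 ?_) (mul_left_cancel₀ hp2 ?_) rfl)
    · rw [← hn, Int.natAbs_mul, Int.natAbs_natCast]
      exact lt_mul_left (Int.natAbs_pos.2 hd') hp
    · linear_combination h₀
    · linear_combination h₁
    · linear_combination h₂
  · refine absurd ⟨(A + B * r + C * r ^ 2) / d, ?_⟩ hu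
    rw [← sq, div_pow, add_mul_add_mul_sq_sq hr, h₀', h₁', h₂', eq_div_iff (pow_ne_zero 2 hpd)]
    ring

theorem not_isSquare_of_zmod {p : ℕ} [Fact p.Prime] (hp3 : (3 : ZMod p) ≠ 0)
    (hp17 : (17 : ZMod p) ≠ 0) {r : ZMod p} (hr : r ^ 3 = 17) {u₀ u₁ u₂ : ℤ}
    (hu : ¬IsSquare ((u₀ : ZMod p) + u₁ * r + u₂ * r ^ 2)) :
    ¬IsSquare ((u₀ : K) + u₁ * θ + u₂ * θ ^ 2) := by
  rintro ⟨ξ, hξ⟩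
  obtain ⟨d, A, B, C, hd, hdξ⟩ := exists_int_coeffs ξ
  have hsq : ((A : K) + B * θ + C * θ ^ 2) ^ 2 = d ^ 2 * (u₀ + u₁ * θ + u₂ * θ ^ 2) := by
    rw [← hdξ, hξ]; ring
  rw [add_mul_add_mul_sq_sq θ_pow_three] at hsq
  obtain ⟨h₀, h₁, h₂⟩ := coeffs_eq_zero_of_eq_zero
    (a := ((A ^ 2 + 34 * B * C - d ^ 2 * u₀ : ℤ) : ℚ))
    (b := ((2 * A * B + 17 * C ^ 2 - d ^ 2 * u₁ : ℤ) : ℚ))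
    (c := ((B ^ 2 + 2 * A * C - d ^ 2 * u₂ : ℤ) : ℚ)) (by push_cast; linear_combination hsq)
  simp only [Int.cast_eq_zero, sub_eq_zero] at h₀ h₁ h₂
  exact hd (eq_zero_of_sq_coeffs_eq_sq_mul hp3 hp17 hr hu h₀ h₁ h₂)

theorem E_equation_iff {x y : ℚ} : E.toAffine.Equation x y ↔ y ^ 2 = x ^ 3 + 17 := by
  rw [Affine.equation_iff]; simp [E]

theorem E_eq_zero_of_two_nsmul_eq_zero (P : E.toAffine.Point) (h : 2 • P = 0) : P = 0 := by
  rcases P with _ | @⟨x, y, hP⟩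
  · rfl
  have hneg := eq_neg_of_add_eq_zero_left ((two_nsmul _).symm.trans h)
  rw [Affine.Point.neg_some, Affine.Point.some.injEq] at hneg
  have hy : y = 0 := by simp only [Affine.negY, E, zero_mul, sub_zero, true_and] at hneg; linarith
  have hx := E_equation_iff.1 hP.1
  exact absurd (by rw [hy] at hx; linear_combination hx) (rat_pow_three_ne_seventeen (-x))

theorem descent_identity {L : Type*} [Field L] [CharZero L] {t : L} (ht : t ^ 3 = 17)
    {x₁ x₂ y₁ y₂ : ℚ} (h₁ : E.toAffine.Equation x₁ y₁) (h₂ : E.toAffine.Equation x₂ y₂)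
    (hxy : ¬(x₁ = x₂ ∧ y₁ = E.toAffine.negY x₂ y₂)) :
    ((x₁ : L) + t) * ((x₂ : L) + t) *
        ((E.toAffine.addX x₁ x₂ (E.toAffine.slope x₁ x₂ y₁ y₂) : ℚ) + t) =
      ((y₁ : L) - E.toAffine.slope x₁ x₂ y₁ y₂ * ((x₁ : L) + t)) ^ 2 := by
  have h := congrArg (aeval (-t)) (E.toAffine.addPolynomial_slope h₁ h₂ hxy)
  generalize E.toAffine.slope x₁ x₂ y₁ y₂ = ℓ at h ⊢
  simp only [Affine.addPolynomial, Affine.linePolynomial, Affine.polynomial, Affine.addX, E,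
    map_zero, zero_mul, add_zero, sub_zero, map_add, map_sub, map_mul, map_pow, aeval_neg, aeval_X,
    aeval_C, eval_add, eval_sub, eval_pow, eval_X, eval_C, eq_ratCast, Rat.cast_ofNat,
    Rat.cast_sub, Rat.cast_pow] at h ⊢
  linear_combination -h + ht

theorem ratCast_add_θ_ne_zero (x : ℚ) : (x : K) + θ ≠ 0 := fun h =>
  one_ne_zero (coeffs_eq_zero_of_eq_zero (a := x) (b := 1) (c := 0) (by simpa using h)).2.1

def descentFun : E.toAffine.Point → SquareClass Kˣ
  | .zero => 1
  | .some x _ _ => (Units.mk0 ((x : K) + θ) (ratCast_add_θ_ne_zero x) : Kˣ)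

theorem descentFun_zero : descentFun 0 = 1 :=
  rfl

theorem descentFun_some {x y : ℚ} (h : E.toAffine.Nonsingular x y) :
    descentFun (.some _ _ h) = (Units.mk0 ((x : K) + θ) (ratCast_add_θ_ne_zero x) : Kˣ) :=
  rfl

theorem descentFun_add (P Q : E.toAffine.Point) :
    descentFun (P + Q) = descentFun P * descentFun Q := by
  rcases P with _ | @⟨x₁, y₁, h₁⟩
  · exact (one_mul _).symm
  rcases Q with _ | @⟨x₂, y₂, h₂⟩
  · exact (mul_one _).symm
  by_cases hxy : x₁ = x₂ ∧ y₁ = E.toAffine.negY x₂ y₂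
  · rw [Affine.Point.add_of_Y_eq hxy.1 hxy.2]
    obtain ⟨rfl, -⟩ := hxy
    rw [descentFun_zero, descentFun_some, descentFun_some, ← QuotientGroup.mk_mul, eq_comm,
      SquareClass.mk_eq_one_iff]
    exact IsSquare.mul_self _
  · rw [Affine.Point.add_some hxy, descentFun_some, descentFun_some, descentFun_some]
    refine SquareClass.mk_eq_mul_of_isSquare_mul_mul ?_
    rw [Units.isSquare_iff_isSquare_val]
    simp only [Units.val_mul, Units.val_mk0]
    rw [descent_identity θ_pow_three h₁.1 h₂.1 hxy]
    exact IsSquare.sq _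

def descentMap : E.toAffine.Point →+ Additive (SquareClass Kˣ) where
  toFun P := .ofMul (descentFun P)
  map_zero' := rfl
  map_add' := descentFun_add

theorem descentMap_two_nsmul (P : E.toAffine.Point) : descentMap (2 • P) = 0 := by
  rw [map_nsmul]
  exact SquareClass.sq_eq_one _

theorem ne_two_nsmul_of_descentMap_ne_zero {P : E.toAffine.Point} (h : descentMap P ≠ 0)
    (Q : E.toAffine.Point) : 2 • Q ≠ P := by
  rintro rfl
  exact h (descentMap_two_nsmul Q)

instance : Fact (Nat.Prime 11) := ⟨by norm_num⟩

instance : Fact (Nat.Prime 23) := ⟨by norm_num⟩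

theorem descentMap_p1_ne_zero : descentMap p1 ≠ 0 := by
  change ((Units.mk0 _ _ : Kˣ) : SquareClass Kˣ) ≠ 1
  rw [Ne, SquareClass.mk_eq_one_iff, Units.isSquare_iff_isSquare_val, Units.val_mk0,
    show ((-2 : ℚ) : K) + θ = ((-2 : ℤ) : K) + (1 : ℤ) * θ + (0 : ℤ) * θ ^ 2 by push_cast; ring]
  exact not_isSquare_of_zmod (p := 11) (r := 8) (by decide) (by decide) (by decide) (by decide)

theorem descentMap_p3_ne_zero : descentMap p3 ≠ 0 := by
  change ((Units.mk0 _ _ : Kˣ) : SquareClass Kˣ) ≠ 1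
  rw [Ne, SquareClass.mk_eq_one_iff, Units.isSquare_iff_isSquare_val, Units.val_mk0,
    show ((2 : ℚ) : K) + θ = ((2 : ℤ) : K) + (1 : ℤ) * θ + (0 : ℤ) * θ ^ 2 by push_cast; ring]
  exact not_isSquare_of_zmod (p := 11) (r := 8) (by decide) (by decide) (by decide) (by decide)

theorem descentMap_p1_add_p3_ne_zero : descentMap (p1 + p3) ≠ 0 := by
  rw [map_add]
  change ((Units.mk0 _ _ * Units.mk0 _ _ : Kˣ) : SquareClass Kˣ) ≠ 1
  rw [Ne, SquareClass.mk_eq_one_iff, Units.isSquare_iff_isSquare_val, Units.val_mul,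
    Units.val_mk0, Units.val_mk0, show (((-2 : ℚ) : K) + θ) * (((2 : ℚ) : K) + θ) =
      ((-4 : ℤ) : K) + (0 : ℤ) * θ + (1 : ℤ) * θ ^ 2 by push_cast; ring]
  exact not_isSquare_of_zmod (p := 23) (r := 15) (by decide) (by decide) (by decide) (by decide)

/-- `p1 = (-2, 3)` and `p3 = (2, 5)` are `ℤ`-linearly independent in `E(ℚ)`; in particular
`(m, n) ↦ m • p1 + n • p3` is an injective map `ℤ ⊕ ℤ → E(ℚ)`. -/
theorem p1_p3_independent :
    (∀ m n : ℤ, m • p1 + n • p3 = 0 → m = 0 ∧ n = 0) ∧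
    Function.Injective (fun mn : ℤ × ℤ => mn.1 • p1 + mn.2 • p3) := by
  have key := AddCommGroup.eq_zero_of_zsmul_add_zsmul_eq_zero E_eq_zero_of_two_nsmul_eq_zero
    (ne_two_nsmul_of_descentMap_ne_zero descentMap_p1_ne_zero)
    (ne_two_nsmul_of_descentMap_ne_zero descentMap_p3_ne_zero)
    (ne_two_nsmul_of_descentMap_ne_zero descentMap_p1_add_p3_ne_zero)
  refine ⟨key, fun ⟨m, n⟩ ⟨m', n'⟩ h => ?_⟩
  obtain ⟨hm, hn⟩ := key (m - m') (n - n') (by linear_combination (norm := module) h)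
  exact Prod.ext (sub_eq_zero.1 hm) (sub_eq_zero.1 hn)
end
end

section
/- None of the three points p1 = (-2, 3), p3 = (2, 5), p4 = (4, 9) is a double of an integral point: there is no point q ∈ E(ℚ) whose affine coordinates are both integers and which satisfies 2q = p1, and likewise there is no such q with 2q = p3 or 2q = p4. -/
/-!
For an integral point `q = (a, b)` on `y² = x³ + B`, the duplication formula reads
`4 b² · x(2q) = a⁴ - 8 B a`. If `B` is odd and `x(2q) = c` is an integer, a parity analysis of
this identity forces `8 ∣ c`; the `x`-coordinates `-2, 2, 4` of `p1, p3, p4` are not multiples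
of `8`.
-/

open WeierstrassCurve

noncomputable section

lemma hp4 : E.toAffine.Nonsingular 4 9 := by
  rw [Affine.nonsingular_iff, Affine.equation_iff]; norm_num [E]

/-- The point `p4 = (4, 9)` on `E`. -/
def p4 : E.toAffine.Point := .some _ _ hp4


section MordellCurve

variable {R F : Type*} [CommRing R] [Field F]

def mordellCurve (B : R) : WeierstrassCurve R := ⟨0, 0, 0, 0, B⟩

lemma mordellCurve_equation_iff {B x y : R} :
    (mordellCurve B).toAffine.Equation x y ↔ y ^ 2 = x ^ 3 + B := by
  rw [Affine.equation_iff]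
  simp only [mordellCurve]
  constructor <;> intro h <;> linear_combination h

lemma mordellCurve_two_zsmul_some_x [DecidableEq F] {B x y x' y' : F}
    {h : (mordellCurve B).toAffine.Nonsingular x y}
    {h' : (mordellCurve B).toAffine.Nonsingular x' y'}
    (hq : (2 : ℤ) • Affine.Point.some _ _ h = Affine.Point.some _ _ h') :
    x' * (4 * y ^ 2) = x ^ 4 - 8 * B * x := by
  have hxy : y ^ 2 = x ^ 3 + B := mordellCurve_equation_iff.mp h.1
  rw [two_zsmul] at hq
  have hy : y ≠ (mordellCurve B).toAffine.negY x y := by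
    rintro hy
    rw [Affine.Point.add_self_of_Y_eq hy] at hq
    exact Affine.Point.some_ne_zero h' hq.symm
  rw [Affine.Point.add_self_of_Y_ne hy] at hq
  obtain ⟨h2, hy0⟩ : (2 : F) ≠ 0 ∧ y ≠ 0 := mul_ne_zero_iff.mp fun h0 ↦ hy (by
    simp only [mordellCurve, Affine.negY]
    linear_combination h0)
  have hx' := (Affine.Point.some.inj hq).1
  rw [Affine.slope_of_Y_ne rfl hy] at hx'
  simp only [mordellCurve, Affine.addX, Affine.negY, mul_zero, zero_mul, add_zero, sub_zero,
    sub_neg_eq_add] at hx'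
  rw [← hx', ← two_mul]
  field_simp
  linear_combination -32 * x * hxy

end MordellCurve

/-- With `a = 2k` the identity becomes `c (8k³ + B) = 4 k (k³ - B)`, where `8k³ + B` is odd and
`k (k³ - B)` is even. -/
lemma eight_dvd_of_mul_four_mul_eq {B a c : ℤ} (hB : Odd B)
    (h : c * (4 * (a ^ 3 + B)) = a ^ 4 - 8 * B * a) : 8 ∣ c := by
  obtain ⟨k, rfl⟩ : Even a := by
    refine (Int.even_pow' four_ne_zero).mp ⟨2 * c * (a ^ 3 + B) + 4 * B * a, ?_⟩
    linear_combination -h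
  have hodd : IsCoprime 2 (8 * k ^ 3 + B) :=
    Int.isCoprime_two_left.mpr (Even.add_odd ⟨4 * k ^ 3, by ring⟩ hB)
  have hk : c * (8 * k ^ 3 + B) = 2 ^ 2 * (k * (k ^ 3 - B)) := by
    apply mul_left_cancel₀ (four_ne_zero : (4 : ℤ) ≠ 0)
    linear_combination h
  obtain ⟨m, rfl⟩ : 2 ^ 2 ∣ c := (hodd.pow_left).dvd_of_dvd_mul_right ⟨_, hk⟩
  have hm : m * (8 * k ^ 3 + B) = k * (k ^ 3 - B) := by
    apply mul_left_cancel₀ (four_ne_zero : (4 : ℤ) ≠ 0)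
    linear_combination hk
  have heven : Even (k * (k ^ 3 - B)) := by
    rcases Int.even_or_odd k with hk | hk
    · exact hk.mul_right _
    · exact (hk.pow.sub_odd hB).mul_left _
  obtain ⟨n, rfl⟩ : 2 ∣ m := hodd.dvd_of_dvd_mul_right (hm ▸ heven.two_dvd)
  exact ⟨n, by ring⟩

lemma not_exists_integral_two_zsmul_eq_some {B c : ℤ} (hB : Odd B) (hc : ¬ 8 ∣ c)
    {x y : ℚ} (hx : x = c) (h' : (mordellCurve (B : ℚ)).toAffine.Nonsingular x y) :
    ¬ ∃ (a b : ℤ) (h : (mordellCurve (B : ℚ)).toAffine.Nonsingular (a : ℚ) (b : ℚ)),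
      (2 : ℤ) • Affine.Point.some _ _ h = Affine.Point.some _ _ h' := by
  rintro ⟨a, b, h, hq⟩
  have hdup := mordellCurve_two_zsmul_some_x hq
  rw [mordellCurve_equation_iff.mp h.1, hx] at hdup
  exact hc (eight_dvd_of_mul_four_mul_eq hB (by exact_mod_cast hdup))

/-- None of `p1 = (-2, 3)`, `p3 = (2, 5)`, `p4 = (4, 9)` is the double of a point of `E(ℚ)`
whose affine coordinates are both integers. -/
theorem not_double_of_integral_point :
    (¬ ∃ (a b : ℤ) (h : E.toAffine.Nonsingular (a : ℚ) (b : ℚ)),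
      (2 : ℤ) • (Affine.Point.some _ _ h) = p1) ∧
    (¬ ∃ (a b : ℤ) (h : E.toAffine.Nonsingular (a : ℚ) (b : ℚ)),
      (2 : ℤ) • (Affine.Point.some _ _ h) = p3) ∧
    (¬ ∃ (a b : ℤ) (h : E.toAffine.Nonsingular (a : ℚ) (b : ℚ)),
      (2 : ℤ) • (Affine.Point.some _ _ h) = p4) :=
  ⟨not_exists_integral_two_zsmul_eq_some (B := 17) (c := -2) (by decide) (by decide)
      (by norm_num) hp1,
    not_exists_integral_two_zsmul_eq_some (B := 17) (c := 2) (by decide) (by decide)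
      (by norm_num) hp3,
    not_exists_integral_two_zsmul_eq_some (B := 17) (c := 4) (by decide) (by decide)
      (by norm_num) hp4⟩
end
end
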